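/- Let ψ ≥ 2 be a natural number and set φ = 2ψ − 3. Then for any two distinct vertices a and b of the ψ×ψ grid graph, there exists a permutation σ of the vertices that is a composition of at most φ adjacent transpositions of the grid graph such that σ(b) = b and σ(a) is adjacent to b. -/

import Mathlib

/-!
Walking `a` one step at a time along a walk of length `d` towards `b`, each step being a swap
with the next vertex of the walk, brings it next to `b` after `d - 1` swaps without ever touching
`b`. The grid is the box product of two paths on `ψ` vertices, so any two of its vertices are
joined by a walk of length at most `(ψ - 1) + (ψ - 1)`, whence at most `2ψ - 3` swaps.
-/

/-- The ψ×ψ grid graph on `Fin ψ × Fin ψ`: two vertices are adjacent iff their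
L1 distance (sum of absolute differences of coordinates, as naturals) is 1. -/
def gridGraph (ψ : ℕ) : SimpleGraph (Fin ψ × Fin ψ) where
  Adj u v := Nat.dist u.1.val v.1.val + Nat.dist u.2.val v.2.val = 1
  symm := by
    refine ⟨fun u v h => ?_⟩
    simpa [Nat.dist_comm] using h
  loopless := by
    refine ⟨fun u h => ?_⟩
    simp [Nat.dist_self] at h

namespace SimpleGraph

variable {V α β : Type*}

theorem Walk.exists_adj_swaps_of_ne [DecidableEq V] {G : SimpleGraph V} {a b : V}
    (p : G.Walk a b) (hab : a ≠ b) :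
    ∃ L : List (V × V), L.length + 1 ≤ p.length ∧ (∀ e ∈ L, G.Adj e.1 e.2) ∧
      (L.map fun e => Equiv.swap e.1 e.2).prod b = b ∧
      G.Adj ((L.map fun e => Equiv.swap e.1 e.2).prod a) b := by
  induction p with
  | nil => exact absurd rfl hab
  | @cons a c b hac q ih =>
    by_cases hcb : c = b
    · subst hcb
      exact ⟨[], by simp, by simp, by simp, by simpa using hac⟩
    obtain ⟨L, hlen, hadj, hfix, hmove⟩ := ih hcb
    refine ⟨L ++ [(a, c)], by simpa using hlen, ?_, ?_, ?_⟩
    · intro e he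
      rcases List.mem_append.mp he with he | he
      · exact hadj e he
      · rw [List.mem_singleton.mp he]
        exact hac
    · simpa [Equiv.swap_apply_of_ne_of_ne hab.symm (Ne.symm hcb)] using hfix
    · simpa using hmove

theorem Preconnected.exists_walk_length_lt_card [Fintype V] {G : SimpleGraph V}
    (hG : G.Preconnected) (u v : V) : ∃ p : G.Walk u v, p.length < Fintype.card V :=
  (hG u v).elim_path fun p => ⟨p, p.2.length_lt⟩

theorem Preconnected.exists_walk_boxProd_length_le [Fintype α] [Fintype β]
    {G : SimpleGraph α} {H : SimpleGraph β} (hG : G.Preconnected) (hH : H.Preconnected)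
    (x y : α × β) :
    ∃ p : (G □ H).Walk x y, p.length + 2 ≤ Fintype.card α + Fintype.card β := by
  obtain ⟨p, hp⟩ := hG.exists_walk_length_lt_card x.1 y.1
  obtain ⟨q, hq⟩ := hH.exists_walk_length_lt_card x.2 y.2
  refine ⟨(p.boxProdLeft H x.2).append (q.boxProdRight G y.1), ?_⟩
  have hp' : (p.boxProdLeft H x.2).length = p.length := Walk.length_map _ _
  have hq' : (q.boxProdRight G y.1).length = q.length := Walk.length_map _ _
  rw [Walk.length_append, hp', hq']
  omega

end SimpleGraph

open SimpleGraph

theorem gridGraph_eq_boxProd (ψ : ℕ) : gridGraph ψ = pathGraph ψ □ pathGraph ψ := by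
  ext u v
  simp only [gridGraph, boxProd_adj, pathGraph_adj, Nat.dist, Fin.ext_iff]
  omega

theorem gridGraph_swaps_le_phi_general (ψ : ℕ) (φ : ℕ) (hφ : φ = 2 * ψ - 3)
    (a b : Fin ψ × Fin ψ) (hab : a ≠ b) :
    ∃ L : List ((Fin ψ × Fin ψ) × (Fin ψ × Fin ψ)),
      L.length ≤ φ ∧
      (∀ p ∈ L, (gridGraph ψ).Adj p.1 p.2) ∧
      (L.map fun p => Equiv.swap p.1 p.2).prod b = b ∧
      (gridGraph ψ).Adj ((L.map fun p => Equiv.swap p.1 p.2).prod a) b := by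
  obtain ⟨w, hw⟩ : ∃ w : (gridGraph ψ).Walk a b, w.length + 2 ≤ ψ + ψ := by
    rw [gridGraph_eq_boxProd]
    simpa using (pathGraph_preconnected ψ).exists_walk_boxProd_length_le
      (pathGraph_preconnected ψ) a b
  obtain ⟨L, hlen, hadj, hfix, hmove⟩ := w.exists_adj_swaps_of_ne hab
  exact ⟨L, by omega, hadj, hfix, hmove⟩

/-- For ψ ≥ 2 and φ = 2ψ − 3: any two distinct vertices `a`, `b` of the ψ×ψ
grid graph can be brought adjacent using at most φ adjacent transpositions,
leaving `b` fixed. -/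
theorem gridGraph_swaps_le_phi (ψ : ℕ) (hψ : 2 ≤ ψ) (φ : ℕ) (hφ : φ = 2 * ψ - 3)
    (a b : Fin ψ × Fin ψ) (hab : a ≠ b) :
    ∃ L : List ((Fin ψ × Fin ψ) × (Fin ψ × Fin ψ)),
      L.length ≤ φ ∧
      (∀ p ∈ L, (gridGraph ψ).Adj p.1 p.2) ∧
      (L.map fun p => Equiv.swap p.1 p.2).prod b = b ∧
      (gridGraph ψ).Adj ((L.map fun p => Equiv.swap p.1 p.2).prod a) b :=
  gridGraph_swaps_le_phi_general ψ φ hφ a b hab
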